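/- Let A = {(e^t, e^{λt}) : t ∈ ℂ} ⊆ ℂ* × ℂ* where λ ∈ ℂ \ ℝ. Then the closure of A in ℂ² contains the set ({0} × ℂ) ∪ (ℂ × {0}); in particular the closure of A in ℂ² \ {0} contains ({0} × ℂ*) ∪ (ℂ* × {0}). -/

import Mathlib

/-!
Shifting `t` by `2πi k`, `k ∈ ℤ`, fixes `e^t` while `Re (λ t)` changes by `-2π k Im λ`; since
`Im λ ≠ 0`, letting `k → ±∞` sends `e^{λt}` to `0`, so every `(w, 0)` with `w ≠ 0` is a limit point.
Dually, shifting `λ t` by `2πi k` fixes `e^{λt}` and changes `Re t` by `2π k Im λ / |λ|²`, which gives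
every `(0, w)`. The origin is a limit of the points `(0, w)`.
-/
open Filter Topology Complex
open scoped Real

def expCurve (l : ℂ) : Set (ℂ × ℂ) := {p | ∃ t : ℂ, p = (exp t, exp (l * t))}

theorem mem_closure_expCurve_of_tendsto {l : ℂ} {w : ℂ × ℂ} (t : ℕ → ℂ)
    (h₁ : Tendsto (fun n => exp (t n)) atTop (𝓝 w.1))
    (h₂ : Tendsto (fun n => exp (l * t n)) atTop (𝓝 w.2)) :
    w ∈ closure (expCurve l) :=
  mem_closure_of_tendsto (h₁.prodMk_nhds h₂) (Eventually.of_forall fun n => ⟨t n, rfl⟩)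

theorem exists_tendsto_exp_add_int_mul_nhds_zero (z v : ℂ) (hv : v.re ≠ 0) :
    ∃ k : ℕ → ℤ, Tendsto (fun n => exp (z + k n * v)) atTop (𝓝 0) := by
  suffices ∃ k : ℕ → ℤ, Tendsto (fun n => z.re + k n * v.re) atTop atBot by
    obtain ⟨k, hk⟩ := this
    refine ⟨k, tendsto_zero_iff_norm_tendsto_zero.2 ?_⟩
    simpa [norm_exp] using hk
  rcases hv.lt_or_gt with hneg | hpos
  · refine ⟨fun n => n, tendsto_atBot_add_const_left _ _ ?_⟩
    simpa using tendsto_natCast_atTop_atTop.atTop_mul_const_of_neg hneg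
  · refine ⟨fun n => -n, tendsto_atBot_add_const_left _ _ ?_⟩
    simpa using tendsto_natCast_atTop_atTop.atTop_mul_const_of_neg (neg_neg_of_pos hpos)

theorem mk_zero_mem_closure_expCurve {l w : ℂ} (hl : l.im ≠ 0) (hw : w ≠ 0) :
    (w, 0) ∈ closure (expCurve l) := by
  have hv : (l * (2 * π * I)).re ≠ 0 := by simpa [mul_re] using hl
  obtain ⟨k, hk⟩ := exists_tendsto_exp_add_int_mul_nhds_zero (l * log w) _ hv
  refine mem_closure_expCurve_of_tendsto (fun n => log w + k n * (2 * π * I)) ?_ ?_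
  · simp only [exp_add, exp_log hw, exp_int_mul_two_pi_mul_I, mul_one, tendsto_const_nhds]
  · simpa only [mul_add, mul_left_comm l] using hk

theorem zero_mk_mem_closure_expCurve {l w : ℂ} (hl : l.im ≠ 0) (hw : w ≠ 0) :
    (0, w) ∈ closure (expCurve l) := by
  have hl0 : l ≠ 0 := by rintro rfl; simp at hl
  have hv : (2 * π * I / l).re ≠ 0 := by simp [div_re, hl, hl0, Real.pi_ne_zero]
  obtain ⟨k, hk⟩ := exists_tendsto_exp_add_int_mul_nhds_zero (log w / l) _ hv
  refine mem_closure_expCurve_of_tendsto (fun n => log w / l + k n * (2 * π * I / l)) hk ?_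
  have hsnd (n : ℕ) : l * (log w / l + k n * (2 * π * I / l)) = log w + k n * (2 * π * I) := by
    field_simp
  simp only [hsnd, exp_add, exp_log hw, exp_int_mul_two_pi_mul_I, mul_one, tendsto_const_nhds]

theorem zero_mem_closure_expCurve {l : ℂ} (hl : l.im ≠ 0) : (0 : ℂ × ℂ) ∈ closure (expCurve l) := by
  have hsub : {(0 : ℂ)} ×ˢ {0}ᶜ ⊆ closure (expCurve l) := by
    rintro ⟨_, w⟩ ⟨rfl, hw⟩
    exact zero_mk_mem_closure_expCurve hl hw
  refine closure_minimal hsub isClosed_closure ?_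
  rw [closure_prod_eq, closure_singleton, closure_compl_singleton]
  exact ⟨rfl, trivial⟩

theorem mem_closure_expCurve_of_fst_eq_zero_or_snd_eq_zero {l : ℂ} (hl : l.im ≠ 0) {w : ℂ × ℂ}
    (hw : w.1 = 0 ∨ w.2 = 0) : w ∈ closure (expCurve l) := by
  obtain ⟨w₁, w₂⟩ := w
  rcases eq_or_ne w₁ 0 with rfl | h₁ <;> rcases eq_or_ne w₂ 0 with rfl | h₂
  · exact zero_mem_closure_expCurve hl
  · exact zero_mk_mem_closure_expCurve hl h₂
  · exact mk_zero_mem_closure_expCurve hl h₁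
  · simp_all

/-- For `λ ∈ ℂ \ ℝ`, the closure in `ℂ²` of
`A = {(e^t, e^{λt}) : t ∈ ℂ} ⊆ ℂ* × ℂ*` contains `({0} × ℂ) ∪ (ℂ × {0})`;
in particular its closure in `ℂ² \ {0}` contains `({0} × ℂ*) ∪ (ℂ* × {0})`. -/
theorem statement6 (l : ℂ) (hl : l.im ≠ 0) :
    (∀ w : ℂ × ℂ, w.1 = 0 ∨ w.2 = 0 →
      w ∈ closure {p : ℂ × ℂ | ∃ t : ℂ, p = (Complex.exp t, Complex.exp (l * t))}) ∧
    (∀ w : ℂ × ℂ, w ≠ 0 → ((w.1 = 0 ∧ w.2 ≠ 0) ∨ (w.1 ≠ 0 ∧ w.2 = 0)) →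
      w ∈ closure {p : ℂ × ℂ | ∃ t : ℂ, p = (Complex.exp t, Complex.exp (l * t))} ∩
        {z : ℂ × ℂ | z ≠ 0}) := by
  refine ⟨fun w hw => mem_closure_expCurve_of_fst_eq_zero_or_snd_eq_zero hl hw,
    fun w hw₀ hw => ⟨mem_closure_expCurve_of_fst_eq_zero_or_snd_eq_zero hl ?_, hw₀⟩⟩
  tauto
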